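/- Let (A, μ, α) be a hom-associative algebra over a field k and define the commutator bracket [a,b] := μ(a,b) − μ(b,a). Then (A, [−,−], α) is a hom-Lie algebra: the bracket is bilinear and skew-symmetric, α([a,b]) = [α(a), α(b)], and the hom-Jacobi identity [[a,b], α(c)] + [[b,c], α(a)] + [[c,a], α(b)] = 0 holds for all a, b, c ∈ A. -/

import Mathlib

/-! Bilinearity and skew-symmetry hold because the bracket is the bilinear map `μ - μ.flip`, and
multiplicativity of `α` passes to commutators. The hom-Jacobi sum expands into the alternating sum,
over all permutations of `(a, b, c)`, of the hom-associator `(xy)α(z) - α(x)(yz)`, which vanishes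
termwise in a hom-associative algebra. -/

/-- The commutator bracket `[a,b] := μ(a,b) − μ(b,a)` of a bilinear multiplication. -/
def commBr {k A : Type*} [Field k] [AddCommGroup A] [Module k A]
    (μ : A →ₗ[k] A →ₗ[k] A) (a b : A) : A :=
  μ a b - μ b a

section HomLieAdmissible

variable {k A : Type*} [Field k] [AddCommGroup A] [Module k A]
  (μ : A →ₗ[k] A →ₗ[k] A) (α : A →ₗ[k] A)

def homAssociator (a b c : A) : A :=
  μ (μ a b) (α c) - μ (α a) (μ b c)

theorem commBr_eq_sub_flip_apply (a b : A) : commBr μ a b = (μ - μ.flip) a b := rfl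

theorem commBr_eq_neg_commBr (a b : A) : commBr μ a b = -commBr μ b a :=
  (neg_sub _ _).symm

theorem map_commBr (hαμ : ∀ a b, α (μ a b) = μ (α a) (α b)) (a b : A) :
    α (commBr μ a b) = commBr μ (α a) (α b) := by
  rw [commBr, commBr, map_sub, hαμ, hαμ]

theorem commBr_homJacobi_eq_alternating_sum_homAssociator (a b c : A) :
    commBr μ (commBr μ a b) (α c) + commBr μ (commBr μ b c) (α a)
        + commBr μ (commBr μ c a) (α b)
      = homAssociator μ α a b c - homAssociator μ α b a c + homAssociator μ α b c a
        - homAssociator μ α c b a + homAssociator μ α c a b - homAssociator μ α a c b := by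
  simp only [commBr, homAssociator, map_sub, LinearMap.sub_apply]
  abel

theorem commBr_homJacobi (hassoc : ∀ a b c, μ (α a) (μ b c) = μ (μ a b) (α c)) (a b c : A) :
    commBr μ (commBr μ a b) (α c) + commBr μ (commBr μ b c) (α a)
        + commBr μ (commBr μ c a) (α b) = 0 := by
  have homAssociator_eq_zero : ∀ x y z, homAssociator μ α x y z = 0 := fun x y z ↦
    sub_eq_zero.2 (hassoc x y z).symm
  simp only [commBr_homJacobi_eq_alternating_sum_homAssociator, homAssociator_eq_zero, sub_zero,
    add_zero]

end HomLieAdmissible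

/-- Let `(A, μ, α)` be a hom-associative algebra over a field `k` and define
`[a,b] := μ(a,b) − μ(b,a)`.  Then `(A, [−,−], α)` is a hom-Lie algebra: the bracket is
bilinear and skew-symmetric, `α([a,b]) = [α(a), α(b)]`, and the hom-Jacobi identity
`[[a,b], α(c)] + [[b,c], α(a)] + [[c,a], α(b)] = 0` holds. -/
theorem hom_associative_commutator_hom_lie
    {k A : Type*} [Field k] [AddCommGroup A] [Module k A]
    (μ : A →ₗ[k] A →ₗ[k] A) (αA : A →ₗ[k] A)
    (hαμ : ∀ a b, αA (μ a b) = μ (αA a) (αA b))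
    (hassoc : ∀ a b c, μ (αA a) (μ b c) = μ (μ a b) (αA c)) :
    (∀ a a' b, commBr μ (a + a') b = commBr μ a b + commBr μ a' b)
      ∧ (∀ (t : k) (a b : A), commBr μ (t • a) b = t • commBr μ a b)
      ∧ (∀ a b b', commBr μ a (b + b') = commBr μ a b + commBr μ a b')
      ∧ (∀ (t : k) (a b : A), commBr μ a (t • b) = t • commBr μ a b)
      ∧ (∀ a b, commBr μ a b = -commBr μ b a)
      ∧ (∀ a b, αA (commBr μ a b) = commBr μ (αA a) (αA b))
      ∧ (∀ a b c,
          commBr μ (commBr μ a b) (αA c)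
            + commBr μ (commBr μ b c) (αA a)
            + commBr μ (commBr μ c a) (αA b) = 0) := by
  refine ⟨fun a a' b ↦ ?_, fun t a b ↦ ?_, fun a b b' ↦ ?_, fun t a b ↦ ?_,
    commBr_eq_neg_commBr μ, map_commBr μ αA hαμ, commBr_homJacobi μ αA hassoc⟩ <;>
  simp only [commBr_eq_sub_flip_apply, map_add, map_smul, LinearMap.add_apply,
    LinearMap.smul_apply]
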